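/- Let w be a finitely supported probability vector on ℤ with span 1 (the gcd of differences of support elements is 1), and q(i,j) = ∑_z w(j-i+z)w(z). Then the q-walk is irreducible: for every x,y ∈ ℤ there exists k ≥ 0 with qᵏ(x,y) > 0. -/

import Mathlib

/-- `k`-step transition probabilities of the translation-invariant walk on `ℤ`
with one-step displacement law `v`, i.e. kernel `(i,j) ↦ v (j-i)`. -/
noncomputable def kstep (v : ℤ → ℝ) : ℕ → ℤ → ℤ → ℝ
  | 0, i, j => if i = j then 1 else 0
  | k + 1, i, j => ∑' z : ℤ, kstep v k i z * v (j - z)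

lemma summable_of_fin_supp {f : ℤ → ℝ} (h : (Function.support f).Finite) :
    Summable f :=
  summable_of_ne_finset_zero (s := h.toFinset)
    (fun b hb => Function.notMem_support.mp (fun hs => hb (h.mem_toFinset.mpr hs)))

/-- If `w` is a finitely supported probability vector on `ℤ` with
span 1, then the walk with kernel `q(i,j) = ∑_z w(j-i+z) w(z)` is irreducible:
for all `x, y` there is `k ≥ 0` with `qᵏ(x,y) > 0`. -/
theorem q_walk_irreducible
    (w : ℤ → ℝ)
    (hw_nonneg : ∀ k, 0 ≤ w k) (hw_lt : ∀ k, w k < 1)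
    (hw_sum : ∑' k : ℤ, w k = 1)
    (hw_fin : (Function.support w).Finite)
    (hspan : ∀ k : ℕ, 0 < k →
      (∃ ℓ : ℤ, ∀ x : ℤ, w x ≠ 0 → (k : ℤ) ∣ (x - ℓ)) → k = 1)
    (Q : ℤ → ℝ)
    (hQ : ∀ d : ℤ, Q d = ∑' z : ℤ, w (d + z) * w z) :
    ∀ x y : ℤ, ∃ k : ℕ, 0 < kstep Q k x y := by
  -- basic positivity/summability facts
  have hQnonneg : ∀ d, 0 ≤ Q d := fun d => by
    rw [hQ]; exact tsum_nonneg fun z => mul_nonneg (hw_nonneg _) (hw_nonneg _)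
  have hQsummand : ∀ d : ℤ, Summable (fun z : ℤ => w (d + z) * w z) := fun d =>
    summable_of_fin_supp (hw_fin.subset (by
      intro z hz
      simp only [Function.mem_support] at hz ⊢
      intro h0; apply hz; rw [h0, mul_zero]))
  have hQpos : ∀ a b : ℤ, w a ≠ 0 → w b ≠ 0 → 0 < Q (a - b) := by
    intro a b ha hb
    rw [hQ]
    have h1 : 0 < w (a - b + b) * w b := by
      rw [sub_add_cancel]
      exact mul_pos (lt_of_le_of_ne (hw_nonneg a) (Ne.symm ha))
        (lt_of_le_of_ne (hw_nonneg b) (Ne.symm hb))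
    exact lt_of_lt_of_le h1 (Summable.le_tsum (hQsummand _) b
      (fun z _ => mul_nonneg (hw_nonneg _) (hw_nonneg _)))
  have hQfin : (Function.support Q).Finite := by
    apply (hw_fin.sub hw_fin).subset
    intro d hd
    simp only [Function.mem_support] at hd
    rw [hQ] at hd
    have : ∃ z : ℤ, w (d + z) * w z ≠ 0 := by
      by_contra h
      push_neg at h
      apply hd
      simp [h]
    obtain ⟨z, hz⟩ := this
    have h1 : w (d + z) ≠ 0 := fun h => hz (by rw [h, zero_mul])
    have h2 : w z ≠ 0 := fun h => hz (by rw [h, mul_zero])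
    exact Set.mem_sub.mpr ⟨d + z, h1, z, h2, by ring⟩
  have hkstep_nonneg : ∀ k i j, 0 ≤ kstep Q k i j := by
    intro k
    induction k with
    | zero => intro i j; simp only [kstep]; split <;> norm_num
    | succ k ih =>
      intro i j; simp only [kstep]
      exact tsum_nonneg fun z => mul_nonneg (ih i z) (hQnonneg _)
  have hsummable_step : ∀ k i j, Summable (fun z => kstep Q k i z * Q (j - z)) := by
    intro k i j
    apply summable_of_fin_supp
    apply (hQfin.image (fun d => j - d)).subset
    intro z hz
    simp only [Function.mem_support] at hz
    have hQz : Q (j - z) ≠ 0 := fun h => hz (by rw [h, mul_zero])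
    exact ⟨j - z, hQz, by ring⟩
  -- chain positivity
  have chain : ∀ (l : List ℤ), (∀ d ∈ l, Q d ≠ 0) → ∀ x : ℤ,
      0 < kstep Q l.length x (x + l.sum) := by
    intro l
    induction l using List.reverseRecOn with
    | nil => intro _ x; simp [kstep]
    | append_singleton l d ih =>
      intro hmem x
      have h1 : 0 < kstep Q l.length x (x + l.sum) :=
        ih (fun e he => hmem e (by simp [he])) x
      have hd : 0 < Q d :=
        lt_of_le_of_ne (hQnonneg d) (Ne.symm (hmem d (by simp)))
      simp only [List.length_append, List.sum_append, List.length_singleton,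
        List.sum_singleton, List.length_cons, List.length_nil]
      calc (0:ℝ) < kstep Q l.length x (x + l.sum) * Q d := mul_pos h1 hd
        _ ≤ kstep Q (l.length + 1) x (x + (l.sum + d)) := by
          simp only [kstep]
          have := Summable.le_tsum (hsummable_step l.length x (x + (l.sum + d))) (x + l.sum)
            (fun z _ => mul_nonneg (hkstep_nonneg _ _ _) (hQnonneg _))
          simpa [show x + (l.sum + d) - (x + l.sum) = d by ring] using this
  -- symmetry of Q
  have hQsymm : ∀ d : ℤ, Q (-d) = Q d := by
    intro d
    rw [hQ, hQ]
    calc (∑' z : ℤ, w (-d + z) * w z)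
        = ∑' u : ℤ, w (-d + (d + u)) * w (d + u) :=
          ((Equiv.addLeft d).tsum_eq (fun z : ℤ => w (-d + z) * w z)).symm
      _ = ∑' u : ℤ, w (d + u) * w u := by
          congr 1; funext u
          rw [neg_add_cancel_left, mul_comm]
  -- the support of Q
  set S : Set ℤ := Function.support Q with hS
  have hSneg : ∀ s ∈ S, -s ∈ S := by
    intro s hs
    simp only [hS, Function.mem_support] at hs ⊢
    rwa [hQsymm]
  have hA : ∃ a, w a ≠ 0 := by
    by_contra h
    push_neg at h
    simp [h] at hw_sum
  obtain ⟨a, ha⟩ := hA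
  have hSsub : ∀ x : ℤ, w x ≠ 0 → x - a ∈ S := fun x hx =>
    Function.mem_support.mpr (hQpos x a hx ha).ne'
  -- the subgroup generated by S is all of ℤ
  obtain ⟨g, hg⟩ := Int.subgroup_cyclic (AddSubgroup.closure S)
  have hgdvd : ∀ x : ℤ, w x ≠ 0 → g ∣ (x - a) := by
    intro x hx
    have hmem : x - a ∈ AddSubgroup.closure S := AddSubgroup.subset_closure (hSsub x hx)
    rw [hg, AddSubgroup.mem_closure_singleton] at hmem
    obtain ⟨n, hn⟩ := hmem
    exact ⟨n, by rw [← hn, smul_eq_mul]; ring⟩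
  have hg_ne : g ≠ 0 := by
    intro h0g
    have hall : ∀ x : ℤ, w x ≠ 0 → x = a := by
      intro x hx
      have := hgdvd x hx
      rw [h0g, zero_dvd_iff, sub_eq_zero] at this
      exact this
    have hts : ∑' k : ℤ, w k = w a :=
      tsum_eq_single a (fun b hb => by
        by_contra hb0; exact hb (hall b hb0))
    rw [hts] at hw_sum
    exact absurd hw_sum (hw_lt a).ne
  have hg1 : g.natAbs = 1 := by
    apply hspan g.natAbs (Int.natAbs_pos.mpr hg_ne)
    exact ⟨a, fun x hx => Int.natAbs_dvd.mpr (hgdvd x hx)⟩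
  have htop : AddSubgroup.closure S = ⊤ := by
    rw [eq_top_iff]
    intro n _
    rw [hg, AddSubgroup.mem_closure_singleton]
    rcases Int.natAbs_eq_iff.mp hg1 with h | h
    · exact ⟨n, by rw [h]; simp⟩
    · exact ⟨-n, by rw [h]; simp⟩
  -- the submonoid generated by S is also all of ℤ (S is symmetric)
  have hneg_closed : ∀ m ∈ AddSubmonoid.closure S, -m ∈ AddSubmonoid.closure S := by
    intro m hm
    induction hm using AddSubmonoid.closure_induction with
    | mem s hs => exact AddSubmonoid.subset_closure (hSneg s hs)
    | zero => simpa using AddSubmonoid.zero_mem _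
    | add x y _ _ hx hy => rw [neg_add]; exact AddSubmonoid.add_mem _ hx hy
  have hmono : ∀ n : ℤ, n ∈ AddSubmonoid.closure S := by
    intro n
    have hn : n ∈ AddSubgroup.closure S := by rw [htop]; trivial
    induction hn using AddSubgroup.closure_induction with
    | mem s hs => exact AddSubmonoid.subset_closure hs
    | zero => simpa using AddSubmonoid.zero_mem _
    | add x y _ _ hx hy => exact AddSubmonoid.add_mem _ hx hy
    | neg x _ hx => exact hneg_closed x hx
  -- conclude
  intro x y
  obtain ⟨l, hl, hlsum⟩ := AddSubmonoid.exists_list_of_mem_closure (hmono (y - x))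
  refine ⟨l.length, ?_⟩
  have := chain l (fun d hd => hl d hd) x
  rwa [hlsum, add_sub_cancel] at this
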